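/- Let a < b be consecutive positive zeros of J₁ with J₁ < 0 on (a,b), and let m ≥ 4 with J_m > 0 on (0,b]. Suppose in addition J₁ > 0 on (0,a). Then the function μ ↦ μ·W_{1,m}(μ), where W_{1,m} = J₁J_m' − J_mJ₁', is strictly increasing on (0,a) and strictly decreasing on (a,b). -/

import Mathlib

/-!
Write `θ = x d/dx` (`eulerOp`). Then `μ W_{1,m}(μ) = J₁ θJ_m − J_m θJ₁`, and Bessel's
equation reads `θ²J_k = (k² − x²) J_k`, so
`θ(μ W_{1,m}) = J₁ θ²J_m − J_m θ²J₁ = (m² − 1) J₁ J_m`, which on `(0, b]` has the sign of `J₁`.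
-/

open Set

/-- The Bessel function of the first kind of integer order `k`, via its power series. -/
noncomputable def besselJ (k : ℕ) (x : ℝ) : ℝ :=
  ∑' j : ℕ, (-1 : ℝ) ^ j * (x / 2) ^ (2 * j + k) / (j.factorial * (j + k).factorial)

noncomputable def eulerOp (f : ℝ → ℝ) (x : ℝ) : ℝ := x * deriv f x

theorem strictMonoOn_Ioo_of_eulerOp_pos {f : ℝ → ℝ} {a b : ℝ} (ha : 0 ≤ a)
    (hf : ContinuousOn f (Ioo a b)) (hθ : ∀ x ∈ Ioo a b, 0 < eulerOp f x) :
    StrictMonoOn f (Ioo a b) :=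
  strictMonoOn_of_deriv_pos (convex_Ioo a b) hf fun x hx => by
    rw [interior_Ioo] at hx
    exact pos_of_mul_pos_right (hθ x hx) (ha.trans hx.1.le)

theorem strictAntiOn_Ioo_of_eulerOp_neg {f : ℝ → ℝ} {a b : ℝ} (ha : 0 ≤ a)
    (hf : ContinuousOn f (Ioo a b)) (hθ : ∀ x ∈ Ioo a b, eulerOp f x < 0) :
    StrictAntiOn f (Ioo a b) :=
  strictAntiOn_of_deriv_neg (convex_Ioo a b) hf fun x hx => by
    rw [interior_Ioo] at hx
    exact neg_of_mul_neg_right (hθ x hx) (ha.trans hx.1.le)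

theorem eulerOp_mul_eulerOp_sub {f g : ℝ → ℝ} {x : ℝ} (hf : DifferentiableAt ℝ f x)
    (hg : DifferentiableAt ℝ g x) (hθf : DifferentiableAt ℝ (eulerOp f) x)
    (hθg : DifferentiableAt ℝ (eulerOp g) x) :
    eulerOp (fun y => f y * eulerOp g y - g y * eulerOp f y) x =
      f x * eulerOp (eulerOp g) x - g x * eulerOp (eulerOp f) x := by
  rw [eulerOp, deriv_fun_sub (hf.fun_mul hθg) (hg.fun_mul hθf), deriv_fun_mul hf hθg,
    deriv_fun_mul hg hθf]
  simp only [eulerOp]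
  ring

section PowerSeries

variable {a : ℕ → ℝ} {e : ℕ → ℕ}

theorem summable_mul_exponent_mul_pow (hconv : ∀ x, Summable fun j => a j * x ^ e j) (x : ℝ) :
    Summable fun j => a j * e j * x ^ e j := by
  refine .of_norm_bounded (summable_abs_iff.mpr (hconv (2 * |x|))) fun j => ?_
  have he : (e j : ℝ) ≤ 2 ^ e j := by exact_mod_cast Nat.lt_two_pow_self.le
  rw [Real.norm_eq_abs, abs_mul, abs_mul, abs_mul, abs_pow, abs_pow, Nat.abs_cast, abs_mul,
    abs_two, abs_abs, mul_pow, mul_assoc]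
  gcongr

theorem hasDerivAt_tsum_mul_pow (hconv : ∀ x, Summable fun j => a j * x ^ e j) (x : ℝ) :
    HasDerivAt (fun y => ∑' j, a j * y ^ e j) (∑' j, a j * e j * x ^ (e j - 1)) x := by
  have hR : 1 ≤ |x| + 1 := by simp
  have hx : x ∈ Metric.ball 0 (|x| + 1) := by simp
  refine hasDerivAt_tsum_of_isPreconnected (g := fun j y => a j * y ^ e j)
    (g' := fun j y => a j * e j * y ^ (e j - 1))
    (summable_abs_iff.mpr (summable_mul_exponent_mul_pow hconv (|x| + 1))) Metric.isOpen_ball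
    (convex_ball 0 _).isPreconnected (fun j y _ => ?_) (fun j y hy => ?_) hx (hconv x) hx
  · simpa [mul_assoc] using (hasDerivAt_pow (e j) y).const_mul (a j)
  · rw [mem_ball_zero_iff, Real.norm_eq_abs] at hy
    rw [Real.norm_eq_abs, abs_mul, abs_mul (a j * e j), abs_pow, abs_pow,
      abs_of_pos (by linarith : (0 : ℝ) < |x| + 1)]
    gcongr
    calc |y| ^ (e j - 1) ≤ (|x| + 1) ^ (e j - 1) := by gcongr
      _ ≤ (|x| + 1) ^ e j := pow_le_pow_right₀ hR (Nat.sub_le _ _)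

theorem differentiable_tsum_mul_pow (hconv : ∀ x, Summable fun j => a j * x ^ e j) :
    Differentiable ℝ fun y => ∑' j, a j * y ^ e j :=
  fun x => (hasDerivAt_tsum_mul_pow hconv x).differentiableAt

theorem eulerOp_tsum_mul_pow (hconv : ∀ x, Summable fun j => a j * x ^ e j) :
    eulerOp (fun y => ∑' j, a j * y ^ e j) = fun x => ∑' j, a j * e j * x ^ e j := by
  funext x
  rw [eulerOp, (hasDerivAt_tsum_mul_pow hconv x).deriv, ← tsum_mul_left]
  refine tsum_congr fun j => ?_
  rcases Nat.eq_zero_or_eq_succ_pred (e j) with h | h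
  · simp [h]
  · rw [h, Nat.succ_sub_one, pow_succ]
    ring

end PowerSeries

section Bessel

open scoped Nat

noncomputable def besselCoeff (k j : ℕ) : ℝ := (-1) ^ j / (2 ^ (2 * j + k) * (j ! * (j + k)!))

theorem besselJ_eq_tsum (k : ℕ) :
    besselJ k = fun x => ∑' j, besselCoeff k j * x ^ (2 * j + k) := by
  funext x
  refine tsum_congr fun j => ?_
  rw [besselCoeff, div_pow]
  ring

theorem abs_besselCoeff_le (k j : ℕ) : |besselCoeff k j| ≤ 1 / j ! := by
  have hj : (1 : ℝ) ≤ (j + k)! := by exact_mod_cast (j + k).factorial_pos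
  have h2 : (1 : ℝ) ≤ 2 ^ (2 * j + k) := one_le_pow₀ one_le_two
  rw [besselCoeff, abs_div, abs_pow, abs_neg, abs_one, one_pow, abs_of_pos (by positivity)]
  gcongr
  calc (j ! : ℝ) = 1 * (j ! * 1) := by ring
    _ ≤ 2 ^ (2 * j + k) * (j ! * (j + k)!) := by gcongr

theorem summable_besselCoeff_mul_pow (k : ℕ) (x : ℝ) :
    Summable fun j => besselCoeff k j * x ^ (2 * j + k) := by
  refine .of_norm_bounded ((Real.summable_pow_div_factorial (x ^ 2)).mul_left (|x| ^ k))
    fun j => ?_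
  rw [Real.norm_eq_abs, abs_mul, abs_pow]
  calc |besselCoeff k j| * |x| ^ (2 * j + k) ≤ 1 / j ! * |x| ^ (2 * j + k) := by
        gcongr; exact abs_besselCoeff_le k j
    _ = |x| ^ k * ((x ^ 2) ^ j / j !) := by rw [pow_add, pow_mul, sq_abs]; ring

theorem besselCoeff_succ (k j : ℕ) :
    (((2 * (j + 1) + k : ℕ) : ℝ) ^ 2 - (k : ℝ) ^ 2) * besselCoeff k (j + 1) =
      -besselCoeff k j := by
  rw [besselCoeff, besselCoeff, show j + 1 + k = j + k + 1 by ring, Nat.factorial_succ,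
    Nat.factorial_succ]
  push_cast
  field_simp
  ring

theorem differentiable_besselJ (k : ℕ) : Differentiable ℝ (besselJ k) := by
  rw [besselJ_eq_tsum]
  exact differentiable_tsum_mul_pow (summable_besselCoeff_mul_pow k)

theorem differentiable_eulerOp_besselJ (k : ℕ) : Differentiable ℝ (eulerOp (besselJ k)) := by
  rw [besselJ_eq_tsum, eulerOp_tsum_mul_pow (summable_besselCoeff_mul_pow k)]
  exact differentiable_tsum_mul_pow
    (summable_mul_exponent_mul_pow (summable_besselCoeff_mul_pow k))

theorem eulerOp_eulerOp_besselJ (k : ℕ) (x : ℝ) :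
    eulerOp (eulerOp (besselJ k)) x = ((k : ℝ) ^ 2 - x ^ 2) * besselJ k x := by
  have hJ := summable_besselCoeff_mul_pow k
  have hθJ := summable_mul_exponent_mul_pow hJ
  rw [besselJ_eq_tsum, eulerOp_tsum_mul_pow hJ, eulerOp_tsum_mul_pow hθJ]
  have hθθJ := summable_mul_exponent_mul_pow hθJ x
  have hshift : ∑' j, (besselCoeff k j * (2 * j + k : ℕ) * (2 * j + k : ℕ) * x ^ (2 * j + k)
      - k ^ 2 * (besselCoeff k j * x ^ (2 * j + k)))
      = -x ^ 2 * ∑' j, besselCoeff k j * x ^ (2 * j + k) := by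
    -- the `j = 0` term vanishes; `besselCoeff_succ` turns term `j + 1` into `-x²` times term `j`
    rw [(hθθJ.sub ((hJ x).mul_left _)).tsum_eq_zero_add, ← tsum_mul_left]
    refine (congrArg₂ (· + ·) ?_ (tsum_congr fun j => ?_)).trans (zero_add _)
    · simp only [mul_zero, zero_add]
      ring
    · linear_combination x ^ (2 * (j + 1) + k) * besselCoeff_succ k j
  rw [hθθJ.tsum_sub ((hJ x).mul_left _), tsum_mul_left] at hshift
  beta_reduce
  linear_combination hshift

theorem eulerOp_besselWronskian (n m : ℕ) (x : ℝ) :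
    eulerOp (fun y => besselJ n y * eulerOp (besselJ m) y - besselJ m y * eulerOp (besselJ n) y) x
      = ((m : ℝ) ^ 2 - n ^ 2) * (besselJ n x * besselJ m x) := by
  rw [eulerOp_mul_eulerOp_sub (differentiable_besselJ n x) (differentiable_besselJ m x)
    (differentiable_eulerOp_besselJ n x) (differentiable_eulerOp_besselJ m x),
    eulerOp_eulerOp_besselJ, eulerOp_eulerOp_besselJ]
  ring

end Bessel

theorem muW_monotone_general (m : ℕ) (hm : 4 ≤ m) (a b : ℝ) (ha : 0 < a) (hab : a < b)
    (hJ1pos : ∀ μ ∈ Ioo 0 a, 0 < besselJ 1 μ)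
    (hJ1neg : ∀ μ ∈ Ioo a b, besselJ 1 μ < 0)
    (hJmpos : ∀ μ ∈ Ioc 0 b, 0 < besselJ m μ) :
    StrictMonoOn
      (fun μ => μ * (besselJ 1 μ * deriv (besselJ m) μ - besselJ m μ * deriv (besselJ 1) μ))
      (Ioo 0 a) ∧
    StrictAntiOn
      (fun μ => μ * (besselJ 1 μ * deriv (besselJ m) μ - besselJ m μ * deriv (besselJ 1) μ))
      (Ioo a b) := by
  set W := fun μ => besselJ 1 μ * eulerOp (besselJ m) μ - besselJ m μ * eulerOp (besselJ 1) μ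
  have hW : (fun μ => μ * (besselJ 1 μ * deriv (besselJ m) μ -
      besselJ m μ * deriv (besselJ 1) μ)) = W := by
    funext μ
    simp only [W, eulerOp]
    ring
  have hWcont : Continuous W :=
    (((differentiable_besselJ 1).mul (differentiable_eulerOp_besselJ m)).sub
      ((differentiable_besselJ m).mul (differentiable_eulerOp_besselJ 1))).continuous
  have hm1 : 0 < (m : ℝ) ^ 2 - ((1 : ℕ) : ℝ) ^ 2 := by
    have : (4 : ℝ) ≤ m := by exact_mod_cast hm
    push_cast
    nlinarith
  rw [hW]
  refine ⟨strictMonoOn_Ioo_of_eulerOp_pos le_rfl hWcont.continuousOn fun μ hμ => ?_,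
    strictAntiOn_Ioo_of_eulerOp_neg ha.le hWcont.continuousOn fun μ hμ => ?_⟩
  · rw [eulerOp_besselWronskian]
    exact mul_pos hm1 (mul_pos (hJ1pos μ hμ) (hJmpos μ ⟨hμ.1, (hμ.2.trans hab).le⟩))
  · rw [eulerOp_besselWronskian]
    exact mul_neg_of_pos_of_neg hm1
      (mul_neg_of_neg_of_pos (hJ1neg μ hμ) (hJmpos μ ⟨ha.trans hμ.1, hμ.2.le⟩))

/-- With `a < b` consecutive positive zeros of `J₁`, `J₁ > 0` on `(0,a)`, `J₁ < 0` on
`(a,b)`, and `J_m > 0` on `(0,b]` for some `m ≥ 4`, the function `μ ↦ μ·W_{1,m}(μ)` is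
strictly increasing on `(0,a)` and strictly decreasing on `(a,b)`. -/
theorem muW_monotone (m : ℕ) (hm : 4 ≤ m) (a b : ℝ) (ha : 0 < a) (hab : a < b)
    (hJ1a : besselJ 1 a = 0) (hJ1b : besselJ 1 b = 0)
    (hJ1pos : ∀ μ ∈ Ioo 0 a, 0 < besselJ 1 μ)
    (hJ1neg : ∀ μ ∈ Ioo a b, besselJ 1 μ < 0)
    (hJmpos : ∀ μ ∈ Ioc 0 b, 0 < besselJ m μ) :
    StrictMonoOn
      (fun μ => μ * (besselJ 1 μ * deriv (besselJ m) μ - besselJ m μ * deriv (besselJ 1) μ))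
      (Ioo 0 a) ∧
    StrictAntiOn
      (fun μ => μ * (besselJ 1 μ * deriv (besselJ m) μ - besselJ m μ * deriv (besselJ 1) μ))
      (Ioo a b) :=
  muW_monotone_general m hm a b ha hab hJ1pos hJ1neg hJmpos
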